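/- arXiv:math/0010197 — 4 statements merged into one kernel-verified Lean document; each statement's English description precedes it below -/
import Mathlib

section
/- Let C = (c_1,…,c_n) be a nonzero vector in ℂ^n with f_i(C) + c_i = 0 for all i, and K_{ij} = (∂f_i/∂x_j)(C) + δ_{ij}. Define the linear operators on ℂ[x_1,…,x_n]: D_+ = Σ_{i=1}^n f_i ∂/∂x_i, D_0 = Σ_{i,j=1}^n K_{ij} x_j ∂/∂x_i, U = Σ_{i=1}^n x_i ∂/∂x_i, and D_- = Σ_{i=1}^n c_i ∂/∂x_i. Then the commutator identities [D_-, D_+] = D_0 - U and [D_0, D_-] = D_- hold, where [A,B] = AB - BA. -/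
/-!
Write `∂ᵥ = ∑ vᵢ ∂/∂xᵢ` for the derivation of `R[x₁,…,xₙ]` with polynomial coefficients `v`. Since
a derivation is determined by its values on the variables, `[∂ᵥ, ∂_w] = ∂_{∂ᵥ w - ∂_w v}`. All four
operators are of this form, so both identities reduce to identities between coefficient vectors.
These follow from Euler's identity: for `f` homogeneous quadratic, `∑ cⱼ ∂ⱼf` is the linear form
`∑ (∂ⱼf)(c) xⱼ`, and `∑ cⱼ (∂ⱼf)(c) = 2 f(c)`.
-/

open MvPolynomial

namespace MvPolynomial

variable {σ R : Type*} [CommRing R]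

theorem pderiv_pderiv_comm (i j : σ) (p : MvPolynomial σ R) :
    pderiv i (pderiv j p) = pderiv j (pderiv i p) := by
  classical
  have hlie : ⁅pderiv i, pderiv j⁆ = (0 : Derivation R (MvPolynomial σ R) (MvPolynomial σ R)) :=
    derivation_ext fun k => by
      rw [Derivation.commutator_apply]
      simp [pderiv_X, Pi.single_apply, apply_ite (pderiv _)]
  rw [← sub_eq_zero, ← Derivation.commutator_apply, hlie, Derivation.zero_apply]

theorem IsHomogeneous.eq_C_eval {p : MvPolynomial σ R} (h : p.IsHomogeneous 0) (c : σ → R) :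
    p = C (eval c p) := by
  rw [← totalDegree_zero_iff_isHomogeneous, totalDegree_eq_zero_iff_eq_C] at h
  rw [h, eval_C]

variable [Fintype σ]

theorem IsHomogeneous.sum_mul_eval_pderiv {p : MvPolynomial σ R} {n : ℕ}
    (h : p.IsHomogeneous n) (c : σ → R) :
    ∑ i, c i * eval c (pderiv i p) = n * eval c p := by
  simpa [map_sum, nsmul_eq_mul] using congrArg (eval c) h.sum_X_mul_pderiv

theorem isHomogeneous_sum_C_mul_X_mul_X (a : σ → σ → R) :
    (∑ j, ∑ k, C (a j k) * X j * X k : MvPolynomial σ R).IsHomogeneous 2 :=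
  IsHomogeneous.sum _ _ _ fun j _ => IsHomogeneous.sum _ _ _ fun k _ =>
    ((isHomogeneous_C σ (a j k)).mul (isHomogeneous_X R j)).mul (isHomogeneous_X R k)

noncomputable def vectorField (v : σ → MvPolynomial σ R) :
    Derivation R (MvPolynomial σ R) (MvPolynomial σ R) :=
  ∑ i, v i • pderiv i

theorem vectorField_apply (v : σ → MvPolynomial σ R) (p : MvPolynomial σ R) :
    vectorField v p = ∑ i, v i * pderiv i p := by
  change Derivation.coeFnAddMonoidHom (∑ i, v i • pderiv i) p = _
  simp [map_sum, Finset.sum_apply]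

theorem vectorField_X (v : σ → MvPolynomial σ R) (j : σ) : vectorField v (X j) = v j := by
  classical
  simp [vectorField_apply, pderiv_X, Pi.single_apply]

theorem vectorField_sub (v w : σ → MvPolynomial σ R) :
    vectorField (v - w) = vectorField v - vectorField w := by
  ext p
  simp [vectorField_apply, sub_mul]

theorem vectorField_sum_C_mul_X (v : σ → MvPolynomial σ R) (k : σ → R) :
    vectorField v (∑ j, C (k j) * X j) = ∑ j, C (k j) * v j := by
  simp only [map_sum, Derivation.leibniz, derivation_C, vectorField_X, smul_eq_mul, mul_zero,
    add_zero]

theorem lie_vectorField (v w : σ → MvPolynomial σ R) :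
    ⁅vectorField v, vectorField w⁆ = vectorField fun i => vectorField v (w i) - vectorField w (v i) :=
  derivation_ext fun j => by simp [Derivation.commutator_apply, vectorField_X]

theorem IsHomogeneous.vectorField_C_eq_C_eval {p : MvPolynomial σ R} (h : p.IsHomogeneous 1)
    (c : σ → R) : vectorField (fun i => C (c i)) p = C (eval c p) := by
  have hconst : ∀ i, pderiv i p = C (eval c (pderiv i p)) := fun i => h.pderiv.eq_C_eval c
  calc vectorField (fun i => C (c i)) p = C (∑ i, c i * eval c (pderiv i p)) := by
        rw [vectorField_apply, map_sum]
        exact Finset.sum_congr rfl fun i _ => by rw [map_mul, ← hconst]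
    _ = C (eval c p) := by rw [h.sum_mul_eval_pderiv, Nat.cast_one, one_mul]

theorem IsHomogeneous.vectorField_C_eq_sum_eval_pderiv {p : MvPolynomial σ R}
    (h : p.IsHomogeneous 2) (c : σ → R) :
    vectorField (fun i => C (c i)) p = ∑ j, C (eval c (pderiv j p)) * X j := by
  set D := vectorField (fun i => C (c i) : σ → MvPolynomial σ R)
  have hpderiv : ∀ j, (pderiv j p).IsHomogeneous 1 := fun j => h.pderiv
  have hD : (D p).IsHomogeneous 1 := by
    rw [vectorField_apply]
    exact IsHomogeneous.sum _ _ _ fun i _ => (isHomogeneous_C σ (c i)).mul h.pderiv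
  have hcomm : ∀ j, pderiv j (D p) = D (pderiv j p) := fun j => by
    simp only [D, vectorField_apply, map_sum, pderiv_C_mul, pderiv_pderiv_comm j]
  calc D p = ∑ j, X j * pderiv j (D p) := by simpa using hD.sum_X_mul_pderiv.symm
    _ = ∑ j, C (eval c (pderiv j p)) * X j := by
      simp_rw [hcomm, D, (hpderiv _).vectorField_C_eq_C_eval, mul_comm]

end MvPolynomial

theorem commutator_identities_general (n : ℕ) (a : Fin n → Fin n → Fin n → ℂ)
    (f : Fin n → MvPolynomial (Fin n) ℂ)
    (hf : ∀ i, f i = ∑ j, ∑ k, C (a i j k) * X j * X k)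
    (c : Fin n → ℂ)
    (hC : ∀ i, eval c (f i) + c i = 0)
    (K : Matrix (Fin n) (Fin n) ℂ)
    (hK : ∀ i j, K i j = eval c (pderiv j (f i)) + if i = j then 1 else 0)
    (Dp D0 U Dm : MvPolynomial (Fin n) ℂ → MvPolynomial (Fin n) ℂ)
    (hDp : ∀ P, Dp P = ∑ i, f i * pderiv i P)
    (hD0 : ∀ P, D0 P = ∑ i, (∑ j, C (K i j) * X j) * pderiv i P)
    (hU : ∀ P, U P = ∑ i, X i * pderiv i P)
    (hDm : ∀ P, Dm P = ∑ i, C (c i) * pderiv i P) :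
    (∀ P, Dm (Dp P) - Dp (Dm P) = D0 P - U P) ∧
    (∀ P, D0 (Dm P) - Dm (D0 P) = Dm P) := by
  obtain rfl : Dp = vectorField f := funext fun P => (hDp P).trans (vectorField_apply ..).symm
  obtain rfl : D0 = vectorField fun i => ∑ j, C (K i j) * X j :=
    funext fun P => (hD0 P).trans (vectorField_apply ..).symm
  obtain rfl : U = vectorField X := funext fun P => (hU P).trans (vectorField_apply ..).symm
  obtain rfl : Dm = vectorField fun i => C (c i) :=
    funext fun P => (hDm P).trans (vectorField_apply ..).symm
  have hquad : ∀ i, (f i).IsHomogeneous 2 := fun i => hf i ▸ isHomogeneous_sum_C_mul_X_mul_X _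
  have hK_linear : ∀ i, ∑ j, C (K i j) * X j = vectorField (fun i => C (c i)) (f i) + X i := by
    intro i
    simp [hK, (hquad i).vectorField_C_eq_sum_eval_pderiv, add_mul, Finset.sum_add_distrib]
  have hKc : ∀ i, ∑ j, K i j * c j = -c i := fun i => by
    calc ∑ j, K i j * c j = ∑ j, c j * eval c (pderiv j (f i)) + c i := by
          simp [hK, mul_add, Finset.sum_add_distrib, mul_comm]
      _ = -c i := by linear_combination (hquad i).sum_mul_eval_pderiv c + 2 * hC i
  refine ⟨fun P => ?_, fun P => ?_⟩
  · rw [← Derivation.commutator_apply, lie_vectorField, ← Derivation.sub_apply, ← vectorField_sub]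
    congr 2
    ext1 i
    simp [hK_linear, derivation_C]
  · rw [← Derivation.commutator_apply, lie_vectorField]
    congr 2
    ext1 i
    rw [derivation_C, zero_sub, vectorField_sum_C_mul_X]
    simp only [← map_mul, ← map_sum, hKc, map_neg, neg_neg]

/-- The commutator identities `[D₋, D₊] = D₀ - U` and `[D₀, D₋] = D₋` for the
operators associated with a quadratic homogeneous system. -/
theorem commutator_identities (n : ℕ) (a : Fin n → Fin n → Fin n → ℂ)
    (f : Fin n → MvPolynomial (Fin n) ℂ)
    (hf : ∀ i, f i = ∑ j, ∑ k, C (a i j k) * X j * X k)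
    (c : Fin n → ℂ) (hc : c ≠ 0)
    (hC : ∀ i, eval c (f i) + c i = 0)
    (K : Matrix (Fin n) (Fin n) ℂ)
    (hK : ∀ i j, K i j = eval c (pderiv j (f i)) + if i = j then 1 else 0)
    (Dp D0 U Dm : MvPolynomial (Fin n) ℂ → MvPolynomial (Fin n) ℂ)
    (hDp : ∀ P, Dp P = ∑ i, f i * pderiv i P)
    (hD0 : ∀ P, D0 P = ∑ i, (∑ j, C (K i j) * X j) * pderiv i P)
    (hU : ∀ P, U P = ∑ i, X i * pderiv i P)
    (hDm : ∀ P, Dm P = ∑ i, C (c i) * pderiv i P) :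
    (∀ P, Dm (Dp P) - Dp (Dm P) = D0 P - U P) ∧
    (∀ P, D0 (Dm P) - Dm (D0 P) = Dm P) :=
  commutator_identities_general n a f hf c hC K hK Dp D0 U Dm hDp hD0 hU hDm
end

section
/- Suppose C = (c_1,…,c_n) is a nonzero vector in ℂ^n with f_i(C) + c_i = 0 for all i, the Kovalevskaya matrix K_{ij} = (∂f_i/∂x_j)(C) + δ_{ij} is diagonalizable with eigenvalues ρ_1 = -1, ρ_2, …, ρ_n, and the system possesses a nonzero homogeneous polynomial first integral F_M of degree M ≥ 1 (i.e., Σ_{i=1}^n f_i ∂F_M/∂x_i = 0). Then there exist nonnegative integers k_2,…,k_n such that k_2ρ_2 + ⋯ + k_nρ_n = M and k_2 + ⋯ + k_n ≤ M. -/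
/-!
`K c = -c` by Euler's identity, so some eigenvalue `ρ j` is `-1` and `c` can replace the `j`-th
column of the eigenbasis `L`. In the coordinates `x = c + L z` the first integral becomes
`G(z) = F(c + L z)`, nonzero and of total degree `≤ M`. As `F` is homogeneous,
`∑ (fᵢ + xᵢ) ∂ᵢF = M F`, and `f(x) + x` becomes the field `diag(ρ) z + q(z)` with `q` quadratic;
Euler's identity becomes `∂ⱼG + ∑ zₘ ∂ₘG = M G`. On a monomial `z^k` of `G` of least total
degree, the first identity gives `∑ kₘ ρₘ = M` (the quadratic part only produces higher degrees)
and the second gives `kⱼ = 0` (otherwise `z^(k - eⱼ)` would get a nonzero coefficient). Finally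
swap the indices `j` and `0`, which carry the same eigenvalue `-1`.
-/

open scoped Matrix

theorem Equiv.sum_comp_swap_mul_of_eq {ι S : Type*} [Fintype ι] [DecidableEq ι]
    [NonUnitalNonAssocSemiring S] (u v : ι → S) {i j : ι} (hv : v i = v j) :
    ∑ m, u (Equiv.swap i j m) * v m = ∑ m, u m * v m := by
  have hvswap : ∀ m, v (Equiv.swap i j m) = v m := by
    intro m
    rcases eq_or_ne m i with rfl | hi
    · simp [hv]
    rcases eq_or_ne m j with rfl | hj
    · simp [hv]
    rw [Equiv.swap_apply_of_ne_of_ne hi hj]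
  calc ∑ m, u (Equiv.swap i j m) * v m = ∑ m, u (Equiv.swap i j m) * v (Equiv.swap i j m) := by
        simp only [hvswap]
    _ = ∑ m, u m * v m := Equiv.sum_comp (Equiv.swap i j) fun m => u m * v m

namespace Matrix

variable {n 𝕜 : Type*} [Fintype n] [DecidableEq n] [Field 𝕜]

theorem exists_updateCol_eigenvector {K L : Matrix n n 𝕜} {ρ c : n → 𝕜} {μ : 𝕜}
    (hL : IsUnit L.det) (hdiag : K * L = L * diagonal ρ) (hc : c ≠ 0) (hKc : K *ᵥ c = μ • c) :
    ∃ j, ρ j = μ ∧ IsUnit (L.updateCol j c).det ∧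
      K * L.updateCol j c = L.updateCol j c * diagonal ρ := by
  set α := L⁻¹ *ᵥ c
  have hLα : L *ᵥ α = c := by simp [α, mulVec_mulVec, mul_nonsing_inv _ hL]
  obtain ⟨j, hj⟩ : ∃ j, α j ≠ 0 := by
    by_contra! h
    exact hc (by rw [← hLα, funext h, ← Pi.zero_def, mulVec_zero])
  have hdα : diagonal ρ *ᵥ α = μ • α := by
    apply mulVec_injective_iff_isUnit.mpr ((isUnit_iff_isUnit_det L).mpr hL)
    rw [mulVec_mulVec, ← hdiag, ← mulVec_mulVec, hLα, hKc, mulVec_smul, hLα]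
  have hρj : ρ j = μ := by
    have := congrFun hdα j
    rw [mulVec_diagonal, Pi.smul_apply, smul_eq_mul] at this
    exact mul_right_cancel₀ hj this
  refine ⟨j, hρj, ?_, ?_⟩
  · have hc_eq : c = fun k => ∑ i, α i • L k i := by
      rw [← hLα]
      ext k
      simp [mulVec, dotProduct, mul_comm]
    rw [hc_eq, det_updateCol_sum, smul_eq_mul]
    exact (isUnit_iff_ne_zero.mpr hj).mul hL
  · rw [mul_updateCol, hdiag, hKc]
    ext i m
    rcases eq_or_ne m j with rfl | hm
    · simp [hρj, mul_comm]
    · simp [updateCol_ne hm, mul_diagonal]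

end Matrix

namespace MvPolynomial

open Matrix

variable {σ τ R : Type*}

section Derivatives

variable [CommSemiring R]

theorem coeff_X_mul_pderiv (i : σ) (P : MvPolynomial σ R) (k : σ →₀ ℕ) :
    coeff k (X i * pderiv i P) = k i * coeff k P := by
  classical
  induction P using induction_on' with
  | monomial s r =>
    rw [X_mul_pderiv_monomial, coeff_smul, coeff_monomial]
    split_ifs with h <;> simp [h, nsmul_eq_mul]
  | add P Q hP hQ => simp [mul_add, hP, hQ]

theorem sum_mul_pderiv_aeval [Fintype σ] [Fintype τ] (g : σ → MvPolynomial τ R)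
    (W : τ → MvPolynomial τ R) (V : σ → MvPolynomial σ R)
    (h : ∀ i, ∑ m, W m * pderiv m (g i) = aeval g (V i)) (P : MvPolynomial σ R) :
    ∑ m, W m * pderiv m (aeval g P) = aeval g (∑ i, V i * pderiv i P) := by
  classical
  induction P using induction_on with
  | C a => simp
  | add P Q hP hQ => simp only [map_add, mul_add, Finset.sum_add_distrib, hP, hQ]
  | mul_X P j hP =>
    simp only [map_mul, aeval_X, Derivation.leibniz, smul_eq_mul, mul_add, pderiv_X,
      Finset.sum_add_distrib]
    have hsingle : ∑ i, V i * (P * Pi.single (M := fun _ => MvPolynomial σ R) i 1 j)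
        = P * V j := by
      simp [Pi.single_apply, mul_comm]
    have hleft : ∑ m, W m * (aeval g P * pderiv m (g j)) = aeval g P * aeval g (V j) := by
      rw [← h j, Finset.mul_sum]
      exact Finset.sum_congr rfl fun m _ => by ring
    have hright : ∑ m, W m * (g j * pderiv m (aeval g P))
        = g j * aeval g (∑ i, V i * pderiv i P) := by
      rw [← hP, Finset.mul_sum]
      exact Finset.sum_congr rfl fun m _ => by ring
    rw [hsingle, hleft, hright, map_add, map_mul, map_sum, map_sum, Finset.mul_sum]
    congr 1
    refine Finset.sum_congr rfl fun i _ => ?_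
    simp only [map_mul, aeval_X]
    ring

theorem sum_mul_pderiv_aeval_eq_nsmul [Fintype σ] [Fintype τ] {g : σ → MvPolynomial τ R}
    {W : τ → MvPolynomial τ R} {f : σ → MvPolynomial σ R}
    (h : ∀ i, ∑ m, W m * pderiv m (g i) = aeval g (f i + X i)) {F : MvPolynomial σ R} {M : ℕ}
    (hF : F.IsHomogeneous M) (hFint : ∑ i, f i * pderiv i F = 0) :
    ∑ m, W m * pderiv m (aeval g F) = M • aeval g F := by
  simp only [sum_mul_pderiv_aeval g W _ h, add_mul, Finset.sum_add_distrib, hFint,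
    hF.sum_X_mul_pderiv, zero_add, map_nsmul]

end Derivatives

section Quadratic

variable [CommSemiring R] [Fintype σ]

noncomputable def quadraticPoly (a : σ → σ → R) : MvPolynomial σ R :=
  ∑ j, ∑ k, C (a j k) * X j * X k

theorem isHomogeneous_quadraticPoly (a : σ → σ → R) : (quadraticPoly a).IsHomogeneous 2 :=
  IsHomogeneous.sum _ _ _ fun j _ => IsHomogeneous.sum _ _ _ fun k _ =>
    (isHomogeneous_C_mul_X (a j k) j).mul (isHomogeneous_X R k)

theorem aeval_add_quadraticPoly {A : Type*} [CommSemiring A] [Algebra R A] (a : σ → σ → R)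
    (x y : σ → A) :
    aeval (x + y) (quadraticPoly a) = aeval x (quadraticPoly a)
      + ∑ m, aeval x (pderiv m (quadraticPoly a)) * y m + aeval y (quadraticPoly a) := by
  classical
  let IsTaylor : MvPolynomial σ R → Prop := fun P =>
    aeval (x + y) P = aeval x P + ∑ m, aeval x (pderiv m P) * y m + aeval y P
  have hadd : ∀ P Q, IsTaylor P → IsTaylor Q → IsTaylor (P + Q) := by
    intro P Q hP hQ
    simp only [IsTaylor, map_add, add_mul, Finset.sum_add_distrib, hP, hQ]
    ring
  have hzero : IsTaylor 0 := by simp [IsTaylor]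
  refine Finset.sum_induction _ IsTaylor hadd hzero fun j _ =>
    Finset.sum_induction _ IsTaylor hadd hzero fun k _ => ?_
  simp only [IsTaylor, map_mul, algHom_C, aeval_X, Pi.add_apply, mul_add, add_mul,
    Derivation.leibniz, pderiv_X, Pi.single_apply, smul_eq_mul, mul_ite, mul_one, mul_zero,
    derivation_C, add_zero, map_add, apply_ite (aeval x), map_zero, ite_mul, zero_mul,
    Finset.sum_add_distrib, Finset.sum_ite_eq, Finset.mem_univ, ↓reduceIte]
  ring

end Quadratic

theorem totalDegree_aeval_le [CommSemiring R] {g : σ → MvPolynomial τ R}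
    (hg : ∀ i, (g i).totalDegree ≤ 1) (P : MvPolynomial σ R) :
    (aeval g P).totalDegree ≤ P.totalDegree := by
  classical
  conv_lhs => rw [P.as_sum, map_sum]
  refine totalDegree_finsetSum_le fun s hs => ?_
  rw [aeval_monomial, algebraMap_eq, Finsupp.prod]
  calc (C (coeff s P) * ∏ i ∈ s.support, g i ^ s i).totalDegree
      ≤ (C (coeff s P)).totalDegree + ∑ i ∈ s.support, (g i ^ s i).totalDegree :=
        (totalDegree_mul _ _).trans (Nat.add_le_add_left (totalDegree_finsetProd _ _) _)
    _ ≤ 0 + ∑ i ∈ s.support, s i * 1 := by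
        rw [totalDegree_C]
        exact Nat.add_le_add_left (Finset.sum_le_sum fun i _ =>
          (totalDegree_pow _ _).trans (Nat.mul_le_mul_left _ (hg i))) _
    _ ≤ P.totalDegree := by
        simp only [zero_add, mul_one]
        exact le_totalDegree hs

section LowestOrder

theorem coeff_mul_pderiv_eq_zero_of_degree_le [CommSemiring R] {q G : MvPolynomial σ R} {e : ℕ}
    (hq : q.IsHomogeneous e) (he : 2 ≤ e) {k : σ →₀ ℕ}
    (hk : ∀ s ∈ G.support, k.degree ≤ s.degree) (i : σ) :
    coeff k (q * pderiv i G) = 0 := by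
  classical
  rw [coeff_mul]
  refine Finset.sum_eq_zero fun x hx => ?_
  rw [Finset.HasAntidiagonal.mem_antidiagonal] at hx
  by_contra hne
  have hx₁ : x.1.degree = e :=
    (hq.degree_eq_sum_deg_support (mem_support_iff.mpr (left_ne_zero_of_mul hne))).symm
  have hx₂ : x.2 + Finsupp.single i 1 ∈ G.support := by
    have := right_ne_zero_of_mul hne
    rw [coeff_pderiv] at this
    exact mem_support_iff.mpr (left_ne_zero_of_mul this)
  have := hk _ hx₂
  rw [← hx, map_add, map_add, Finsupp.degree_single] at this
  omega

variable [CommRing R] [IsDomain R] [Fintype σ] {G : MvPolynomial σ R} {k : σ →₀ ℕ}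

theorem sum_mul_eq_of_sum_mul_pderiv_eq_smul (ρ : σ → R) (q : σ → MvPolynomial σ R)
    (hq : ∀ i, (q i).IsHomogeneous 2) (μ : R)
    (hG : ∑ i, (C (ρ i) * X i + q i) * pderiv i G = μ • G)
    (hkG : k ∈ G.support) (hk : ∀ s ∈ G.support, k.degree ≤ s.degree) :
    ∑ i, (k i : R) * ρ i = μ := by
  have h := congrArg (coeff k) hG
  simp only [coeff_sum, add_mul, coeff_add, coeff_mul_pderiv_eq_zero_of_degree_le (hq _) le_rfl hk,
    add_zero, mul_assoc, coeff_C_mul, coeff_X_mul_pderiv, coeff_smul, smul_eq_mul] at h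
  apply mul_right_cancel₀ (mem_support_iff.mp hkG)
  rw [← h, Finset.sum_mul]
  exact Finset.sum_congr rfl fun i _ => by ring

theorem apply_eq_zero_of_pderiv_add_sum_X_mul_pderiv_eq_smul [CharZero R] (j : σ) (μ : R)
    (hG : pderiv j G + ∑ i, X i * pderiv i G = μ • G)
    (hkG : k ∈ G.support) (hk : ∀ s ∈ G.support, k.degree ≤ s.degree) :
    k j = 0 := by
  classical
  by_contra hkj
  set k' := k - Finsupp.single j 1
  have hk' : k' + Finsupp.single j 1 = k :=
    tsub_add_cancel_of_le (Finsupp.single_le_iff.mpr (Nat.one_le_iff_ne_zero.mpr hkj))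
  have hk'G : coeff k' G = 0 := by
    by_contra h
    have := hk _ (mem_support_iff.mpr h)
    rw [← hk', map_add, Finsupp.degree_single] at this
    omega
  have h := congrArg (coeff k') hG
  simp only [coeff_add, coeff_sum, coeff_X_mul_pderiv, hk'G, mul_zero, Finset.sum_const_zero,
    add_zero, coeff_smul, smul_zero, coeff_pderiv, hk'] at h
  exact mul_ne_zero (mem_support_iff.mp hkG) (Nat.cast_add_one_ne_zero _) h

theorem exists_sum_mul_eq_of_totalDegree_le [CharZero R] (hG : G ≠ 0) {M : ℕ}
    (hGM : G.totalDegree ≤ M) (ρ : σ → R) (q : σ → MvPolynomial σ R)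
    (hq : ∀ i, (q i).IsHomogeneous 2) (j : σ)
    (h₁ : ∑ i, (C (ρ i) * X i + q i) * pderiv i G = M • G)
    (h₂ : pderiv j G + ∑ i, X i * pderiv i G = M • G) :
    ∃ k : σ →₀ ℕ, k j = 0 ∧ ∑ i, (k i : R) * ρ i = M ∧ k.degree ≤ M := by
  obtain ⟨k, hkG, hk⟩ := G.support.exists_min_image Finsupp.degree (support_nonempty.mpr hG)
  rw [← Nat.cast_smul_eq_nsmul R] at h₁ h₂
  exact ⟨k, apply_eq_zero_of_pderiv_add_sum_X_mul_pderiv_eq_smul j _ h₂ hkG hk,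
    sum_mul_eq_of_sum_mul_pderiv_eq_smul ρ q hq _ h₁ hkG hk, (le_totalDegree hkG).trans hGM⟩

end LowestOrder

section Kovalevskaya

variable [CommRing R] [Fintype σ] [DecidableEq σ]

noncomputable def kovalevskayaMatrix (f : σ → MvPolynomial σ R) (c : σ → R) : Matrix σ σ R :=
  Matrix.of (fun i j => eval c (pderiv j (f i))) + 1

theorem kovalevskayaMatrix_mulVec_self {f : σ → MvPolynomial σ R}
    (hf : ∀ i, (f i).IsHomogeneous 2) {c : σ → R} (hC : ∀ i, eval c (f i) + c i = 0) :
    kovalevskayaMatrix f c *ᵥ c = -c := by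
  funext i
  have hEuler := congrArg (eval c) (hf i).sum_X_mul_pderiv
  simp only [map_sum, eval_mul, eval_X, nsmul_eq_mul, Nat.cast_ofNat, map_ofNat] at hEuler
  rw [kovalevskayaMatrix, add_mulVec, one_mulVec]
  simp only [Pi.add_apply, Pi.neg_apply, mulVec, dotProduct, of_apply]
  linear_combination (Finset.sum_congr rfl fun j _ => mul_comm _ _).trans hEuler + 2 * hC i

theorem aeval_add_add_eq_kovalevskayaMatrix_mulVec {A : Type*} [CommRing A] [Algebra R A]
    (a : σ → σ → σ → R) {f : σ → MvPolynomial σ R} (hf : ∀ i, f i = quadraticPoly (a i))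
    {c : σ → R} (hC : ∀ i, eval c (f i) + c i = 0) (u : σ → A) (i : σ) :
    aeval (algebraMap R A ∘ c + u) (f i) + (algebraMap R A (c i) + u i)
      = ((kovalevskayaMatrix f c).map (algebraMap R A) *ᵥ u) i + aeval u (f i) := by
  have hKu : ((kovalevskayaMatrix f c).map (algebraMap R A) *ᵥ u) i
      = ∑ m, algebraMap R A (eval c (pderiv m (f i))) * u m + u i := by
    simp [kovalevskayaMatrix, mulVec, dotProduct, one_apply, add_mul, Finset.sum_add_distrib]
  have hCi : algebraMap R A (eval c (f i)) + algebraMap R A (c i) = 0 := by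
    rw [← map_add, hC i, map_zero]
  rw [hf i, aeval_add_quadraticPoly, ← hf i, hKu]
  simp only [aeval_algebraMap_apply, aeval_eq_eval]
  linear_combination hCi

end Kovalevskaya

section Affine

variable [CommRing R] [Fintype σ]

noncomputable def affineSubst (c : σ → R) (L : Matrix σ σ R) : σ → MvPolynomial σ R :=
  fun i => C (c i) + (L.map C *ᵥ X) i

theorem pderiv_mulVec_X (L : Matrix σ σ R) (i m : σ) :
    pderiv m ((L.map C *ᵥ X) i) = C (L i m) := by
  classical
  simp [mulVec, dotProduct, pderiv_X, Pi.single_apply]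

theorem pderiv_affineSubst (c : σ → R) (L : Matrix σ σ R) (i m : σ) :
    pderiv m (affineSubst c L i) = C (L i m) := by
  simp [affineSubst, pderiv_mulVec_X]

theorem isHomogeneous_mulVec_X (L : Matrix σ σ R) (i : σ) :
    ((L.map C *ᵥ X) i).IsHomogeneous 1 :=
  IsHomogeneous.sum _ _ _ fun _ _ => isHomogeneous_C_mul_X _ _

theorem totalDegree_affineSubst_le (c : σ → R) (L : Matrix σ σ R) (i : σ) :
    (affineSubst c L i).totalDegree ≤ 1 :=
  (totalDegree_add _ _).trans <| max_le (by simp) (isHomogeneous_mulVec_X L i).totalDegree_le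

theorem eval_affineSubst (c : σ → R) (L : Matrix σ σ R) (z : σ → R) (i : σ) :
    eval z (affineSubst c L i) = c i + (L *ᵥ z) i := by
  simp [affineSubst, mulVec, dotProduct]

theorem aeval_affineSubst_ne_zero [DecidableEq σ] {𝕜 : Type*} [Field 𝕜] [Infinite 𝕜] {c : σ → 𝕜}
    {L : Matrix σ σ 𝕜} (hL : IsUnit L.det) {F : MvPolynomial σ 𝕜} (hF : F ≠ 0) :
    aeval (affineSubst c L) F ≠ 0 := by
  intro hG
  refine hF (MvPolynomial.funext fun x => ?_)
  have h := congrArg (aeval (L⁻¹ *ᵥ (x - c))) hG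
  rw [aeval_eq_bind₁, aeval_bind₁, map_zero] at h
  have hx : (fun i => aeval (L⁻¹ *ᵥ (x - c)) (affineSubst c L i)) = x := by
    ext i
    rw [aeval_eq_eval, eval_affineSubst, mulVec_mulVec, mul_nonsing_inv _ hL,
      one_mulVec]
    simp
  rw [hx] at h
  rwa [map_zero]

theorem pderiv_add_sum_X_mul_pderiv_aeval_affineSubst [DecidableEq σ] {c : σ → R}
    {L : Matrix σ σ R} {j : σ} (hLj : ∀ i, L i j = c i) {F : MvPolynomial σ R} {M : ℕ}
    (hF : F.IsHomogeneous M) :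
    pderiv j (aeval (affineSubst c L) F) + ∑ m, X m * pderiv m (aeval (affineSubst c L) F)
      = M • aeval (affineSubst c L) F := by
  have hgen : ∀ i, ∑ m, (Pi.single (M := fun _ => MvPolynomial σ R) j 1 m + X m)
      * pderiv m (affineSubst c L i) = aeval (affineSubst c L) (X i : MvPolynomial σ R) := by
    intro i
    simp only [pderiv_affineSubst, aeval_X]
    simp [affineSubst, Pi.single_apply, hLj, add_mul, Finset.sum_add_distrib, mulVec, dotProduct,
      mul_comm]
  have h := sum_mul_pderiv_aeval _ _ _ hgen F
  rw [hF.sum_X_mul_pderiv, map_nsmul] at h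
  rw [← h]
  simp [add_mul, Finset.sum_add_distrib, Pi.single_apply]

theorem exists_sum_mul_pderiv_affineSubst_eq [DecidableEq σ] (a : σ → σ → σ → R)
    {f : σ → MvPolynomial σ R} (hf : ∀ i, f i = quadraticPoly (a i)) {c : σ → R}
    (hC : ∀ i, eval c (f i) + c i = 0) {L : Matrix σ σ R} (hL : IsUnit L.det) {ρ : σ → R}
    (hdiag : kovalevskayaMatrix f c * L = L * diagonal ρ) :
    ∃ q : σ → MvPolynomial σ R, (∀ m, (q m).IsHomogeneous 2) ∧
      ∀ i, ∑ m, (C (ρ m) * X m + q m) * pderiv m (affineSubst c L i)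
        = aeval (affineSubst c L) (f i + X i) := by
  set u : σ → MvPolynomial σ R := L.map C *ᵥ X
  set fu : σ → MvPolynomial σ R := fun i => aeval u (f i)
  refine ⟨L⁻¹.map C *ᵥ fu, fun m => ?_, fun i => ?_⟩
  · refine IsHomogeneous.sum _ _ _ fun i _ => ?_
    simpa using ((hf i ▸ isHomogeneous_quadraticPoly (a i)).aeval u
      (isHomogeneous_mulVec_X L)).C_mul (L⁻¹ m i)
  calc ∑ m, (C (ρ m) * X m + (L⁻¹.map C *ᵥ fu) m) * pderiv m (affineSubst c L i)
      = (L.map C *ᵥ ((diagonal ρ).map C *ᵥ X + L⁻¹.map C *ᵥ fu)) i := by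
        have hd : (diagonal ρ).map C *ᵥ X = fun m => C (ρ m) * (X m : MvPolynomial σ R) := by
          funext m
          rw [diagonal_map (map_zero C), mulVec_diagonal]
        rw [hd]
        simp only [mulVec, dotProduct, pderiv_affineSubst, Pi.add_apply, map_apply, mul_comm]
    _ = ((kovalevskayaMatrix f c * L).map C *ᵥ X + fu) i := by
        rw [mulVec_add, mulVec_mulVec, mulVec_mulVec, ← Matrix.map_mul, ← Matrix.map_mul, ← hdiag,
          mul_nonsing_inv _ hL, Matrix.map_one _ (map_zero C) (map_one C), one_mulVec]
    _ = ((kovalevskayaMatrix f c).map C *ᵥ u) i + aeval u (f i) := by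
        rw [Matrix.map_mul, ← mulVec_mulVec]
        rfl
    _ = aeval (affineSubst c L) (f i + X i) := by
        rw [map_add, aeval_X, ← algebraMap_eq]
        exact (aeval_add_add_eq_kovalevskayaMatrix_mulVec a hf hC u i).symm

end Affine

end MvPolynomial

open MvPolynomial

theorem degree_is_combination_of_kovalevskaya_exponents_general
    (n : ℕ) (a : Fin n → Fin n → Fin n → ℂ)
    (f : Fin n → MvPolynomial (Fin n) ℂ)
    (hf : ∀ i, f i = ∑ j, ∑ k, C (a i j k) * X j * X k)
    (c : Fin n → ℂ) (hc : c ≠ 0)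
    (hC : ∀ i, eval c (f i) + c i = 0)
    (K : Matrix (Fin n) (Fin n) ℂ)
    (hK : ∀ i j, K i j = eval c (pderiv j (f i)) + if i = j then 1 else 0)
    (ρ : Fin n → ℂ) (hρ0 : ∀ h : 0 < n, ρ ⟨0, h⟩ = -1)
    (L : Matrix (Fin n) (Fin n) ℂ) (hL : IsUnit L.det)
    (hdiag : K * L = L * Matrix.diagonal ρ)
    (M : ℕ)
    (F : MvPolynomial (Fin n) ℂ) (hF0 : F ≠ 0) (hFhom : F.IsHomogeneous M)
    (hFint : ∑ i, f i * pderiv i F = 0) :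
    ∃ k : Fin n → ℕ, (∀ h : 0 < n, k ⟨0, h⟩ = 0) ∧
      (∑ i, (k i : ℂ) * ρ i) = (M : ℂ) ∧ (∑ i, k i) ≤ M := by
  have hn : 0 < n := Nat.pos_of_ne_zero fun h => hc (by subst h; exact Subsingleton.elim _ _)
  have hfq : ∀ i, f i = quadraticPoly (a i) := hf
  obtain rfl : K = kovalevskayaMatrix f c := Matrix.ext fun i j => by
    simp [hK, kovalevskayaMatrix, Matrix.one_apply]
  have hKc : kovalevskayaMatrix f c *ᵥ c = (-1 : ℂ) • c := by
    rw [kovalevskayaMatrix_mulVec_self (fun i => hfq i ▸ isHomogeneous_quadraticPoly (a i)) hC,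
      neg_one_smul]
  obtain ⟨j, hρj, hL', hdiag'⟩ := Matrix.exists_updateCol_eigenvector hL hdiag hc hKc
  obtain ⟨q, hq, hgen⟩ := exists_sum_mul_pderiv_affineSubst_eq a hfq hC hL' hdiag'
  obtain ⟨k, hkj, hkρ, hkM⟩ := exists_sum_mul_eq_of_totalDegree_le
    (aeval_affineSubst_ne_zero hL' hF0)
    ((totalDegree_aeval_le (totalDegree_affineSubst_le _ _) F).trans hFhom.totalDegree_le) ρ q hq j
    (sum_mul_pderiv_aeval_eq_nsmul hgen hFhom hFint)
    (pderiv_add_sum_X_mul_pderiv_aeval_affineSubst (fun _ => Matrix.updateCol_self) hFhom)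
  refine ⟨k ∘ Equiv.swap ⟨0, hn⟩ j, fun _ => by simpa using hkj, ?_, ?_⟩
  · rw [← hkρ]
    exact Equiv.sum_comp_swap_mul_of_eq (fun m => (k m : ℂ)) ρ ((hρ0 hn).trans hρj.symm)
  · exact (Equiv.sum_comp (Equiv.swap ⟨0, hn⟩ j) k).trans_le
      ((Finsupp.degree_eq_sum k).symm.trans_le hkM)

/-- Theorem 2 (Tsygvintsev): if a quadratic homogeneous system whose Kovalevskaya
matrix is diagonalizable with eigenvalues `ρ 0 = -1, ρ 1, …, ρ (n-1)` possesses a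
nonzero homogeneous polynomial first integral of degree `M ≥ 1`, then `M` is a
nonnegative integer combination `k₂ρ₂ + ⋯ + kₙρₙ = M` with `k₂ + ⋯ + kₙ ≤ M`. -/
theorem degree_is_combination_of_kovalevskaya_exponents
    (n : ℕ) (a : Fin n → Fin n → Fin n → ℂ)
    (f : Fin n → MvPolynomial (Fin n) ℂ)
    (hf : ∀ i, f i = ∑ j, ∑ k, C (a i j k) * X j * X k)
    (c : Fin n → ℂ) (hc : c ≠ 0)
    (hC : ∀ i, eval c (f i) + c i = 0)
    (K : Matrix (Fin n) (Fin n) ℂ)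
    (hK : ∀ i j, K i j = eval c (pderiv j (f i)) + if i = j then 1 else 0)
    (ρ : Fin n → ℂ) (hρ0 : ∀ h : 0 < n, ρ ⟨0, h⟩ = -1)
    (L : Matrix (Fin n) (Fin n) ℂ) (hL : IsUnit L.det)
    (hdiag : K * L = L * Matrix.diagonal ρ)
    (M : ℕ) (hM : 1 ≤ M)
    (F : MvPolynomial (Fin n) ℂ) (hF0 : F ≠ 0) (hFhom : F.IsHomogeneous M)
    (hFint : ∑ i, f i * pderiv i F = 0) :
    ∃ k : Fin n → ℕ, (∀ h : 0 < n, k ⟨0, h⟩ = 0) ∧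
      (∑ i, (k i : ℂ) * ρ i) = (M : ℂ) ∧ (∑ i, k i) ≤ M :=
  degree_is_combination_of_kovalevskaya_exponents_general n a f hf c hc hC K hK ρ hρ0 L hL hdiag M F
    hF0 hFhom hFint
end

section
/- If there exists z = (z_2,…,z_n) ∈ ℤ_{≥0}^{n-1} satisfying the resonance condition z_2ρ_2 + ⋯ + z_nρ_n = M and z_2 + ⋯ + z_n ≤ M, then there exists a nonzero base function of degree M, i.e., a nonzero homogeneous polynomial P of degree M in y_1,…,y_n with ∂(D_+P)/∂y_1 = 0. -/
open MvPolynomial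

/-- The right-hand side of system (4.1): `ẏ₁ = -y₁² + φ₁`,
`ẏᵢ = (ρᵢ - 1) y₁ yᵢ + φᵢ` for `i ≠ 1`. -/
noncomputable def rhs41 (n : ℕ) [NeZero n] (ρ : Fin n → ℂ)
    (φ : Fin n → MvPolynomial (Fin n) ℂ) (i : Fin n) : MvPolynomial (Fin n) ℂ :=
  if i = 0 then -(X 0) ^ 2 + φ 0 else C (ρ i - 1) * X 0 * X i + φ i

/-- The derivation `D₊` associated with system (4.1), as a linear map. -/
noncomputable def dplus41 (n : ℕ) [NeZero n] (ρ : Fin n → ℂ)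
    (φ : Fin n → MvPolynomial (Fin n) ℂ) :
    MvPolynomial (Fin n) ℂ →ₗ[ℂ] MvPolynomial (Fin n) ℂ :=
  ∑ i : Fin n, (LinearMap.mulLeft ℂ (rhs41 n ρ φ i)).comp (pderiv i).toLinearMap

/-! `L = ∂/∂y₁ ∘ D₊` preserves degree and is triangular with respect to the exponent of `y₁`:
since the `φᵢ` do not involve `y₁`, `L (y^d)` is `(d₁ + 1)(∑ ρᵢ dᵢ - |d|) y^d` (with `ρ₁ := 0`)
plus monomials with a smaller power of `y₁`. For `d = z + (M - |z|) e₁` the resonance makes this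
diagonal entry vanish, so on the finite-dimensional span of the degree-`M` monomials whose
`y₁`-exponent is at most `d₁`, the image of `L` misses `y^d`; hence `L` is not surjective there
and has a nonzero kernel. -/

namespace MvPolynomial

variable {σ R : Type*} [CommSemiring R]

theorem isHomogeneous_of_mem_restrictSupport {s : Set (σ →₀ ℕ)} {p : MvPolynomial σ R} {m : ℕ}
    (hp : p ∈ restrictSupport R s) (hs : s ⊆ {d | d.degree = m}) : p.IsHomogeneous m := by
  rw [← mem_homogeneousSubmodule, homogeneousSubmodule_eq_finsupp_supported]
  exact restrictSupport_mono R hs hp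

variable [NoZeroDivisors R] [CharZero R]

theorem coeff_eq_zero_of_pderiv_eq_zero {p : MvPolynomial σ R} {i : σ} (hp : pderiv i p = 0)
    {m : σ →₀ ℕ} (hm : m i ≠ 0) : coeff m p = 0 := by
  have h := coeff_pderiv (i := i) p (m - Finsupp.single i 1)
  rw [hp, coeff_zero, Finsupp.sub_add_single_one_cancel hm] at h
  exact (mul_eq_zero.mp h.symm).resolve_right (Nat.cast_add_one_ne_zero _)

theorem coeff_mul_eq_zero_of_pderiv_eq_zero {p q : MvPolynomial σ R} {i : σ}
    (hp : pderiv i p = 0) {e : σ →₀ ℕ} (hq : ∀ d ∈ q.support, d i < e i) :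
    coeff e (p * q) = 0 := by
  classical
  rw [coeff_mul]
  refine Finset.sum_eq_zero fun x hx => ?_
  rw [Finset.HasAntidiagonal.mem_antidiagonal] at hx
  by_cases hx₂ : x.2 ∈ q.support
  · have hx₁ : x.1 i ≠ 0 := by
      have := hq _ hx₂
      rw [← hx, Finsupp.add_apply] at this
      omega
    rw [coeff_eq_zero_of_pderiv_eq_zero hp hx₁, zero_mul]
  · rw [notMem_support_iff.mp hx₂, mul_zero]

end MvPolynomial

theorem LinearMap.exists_mem_ne_zero_map_eq_zero_of_not_surjOn {K V : Type*} [DivisionRing K]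
    [AddCommGroup V] [Module K V] (f : V →ₗ[K] V) {W : Submodule K V} [FiniteDimensional K W]
    (hmaps : ∀ v ∈ W, f v ∈ W) (hsurj : ¬ Set.SurjOn f W W) : ∃ v ∈ W, v ≠ 0 ∧ f v = 0 := by
  rw [← LinearMap.injOn_iff_surjOn hmaps] at hsurj
  obtain ⟨x, hx, y, hy, hxy, hne⟩ : ∃ x ∈ W, ∃ y ∈ W, f x = f y ∧ x ≠ y := by
    simpa [Set.InjOn] using hsurj
  exact ⟨x - y, W.sub_mem hx hy, sub_ne_zero.mpr hne, by rw [map_sub, hxy, sub_self]⟩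

section System41

variable {n : ℕ} [NeZero n] (ρ : Fin n → ℂ) (φ : Fin n → MvPolynomial (Fin n) ℂ)

/-- With `ρ₁ := 0` the first equation takes the form of the others: `-y₁² = (ρ₁ - 1) y₁ y₁`. -/
theorem rhs41_eq (i : Fin n) :
    rhs41 n ρ φ i = C (Function.update ρ 0 0 i - 1) * X 0 * X i + φ i := by
  unfold rhs41
  split_ifs with h
  · subst h
    rw [Function.update_self, zero_sub, C_neg, C_1]
    ring
  · simp [Function.update_of_ne h]

theorem dplus41_apply (p : MvPolynomial (Fin n) ℂ) :
    dplus41 n ρ φ p = ∑ i, rhs41 n ρ φ i * pderiv i p := by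
  simp [dplus41]

theorem dplus41_monomial (d : Fin n →₀ ℕ) :
    dplus41 n ρ φ (monomial d 1) =
      monomial (d + Finsupp.single 0 1) (∑ i, (Function.update ρ 0 0 i - 1) * d i) +
        ∑ i, φ i * pderiv i (monomial d 1) := by
  simp_rw [dplus41_apply, rhs41_eq, add_mul, Finset.sum_add_distrib, mul_assoc,
    X_mul_pderiv_monomial]
  congr 1
  rw [map_sum]
  refine Finset.sum_congr rfl fun i _ => ?_
  rw [monomial_add_single, pow_one, nsmul_eq_mul]
  simp only [monomial_eq, C_mul, C_1, map_natCast]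
  ring

theorem coeff_dplus41_monomial_of_lt (hφ0 : ∀ i, pderiv 0 (φ i) = 0) {d e : Fin n →₀ ℕ}
    (hde : d 0 < e 0) :
    coeff e (dplus41 n ρ φ (monomial d 1)) =
      if e = d + Finsupp.single 0 1 then ∑ i, (Function.update ρ 0 0 i - 1) * d i else 0 := by
  have hφ : ∑ i, coeff e (φ i * pderiv i (monomial d 1)) = 0 := by
    refine Finset.sum_eq_zero fun i _ =>
      coeff_mul_eq_zero_of_pderiv_eq_zero (hφ0 i) fun d' hd' => ?_
    rw [pderiv_monomial] at hd'
    obtain rfl := Finset.mem_singleton.mp (support_monomial_subset hd')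
    exact lt_of_le_of_lt (by simp) hde
  rw [dplus41_monomial, coeff_add, coeff_sum, hφ, add_zero, coeff_monomial]
  simp only [eq_comm]

theorem coeff_pderiv_dplus41_monomial (hφ0 : ∀ i, pderiv 0 (φ i) = 0) {d e : Fin n →₀ ℕ}
    (hde : d 0 ≤ e 0) :
    coeff e (pderiv 0 (dplus41 n ρ φ (monomial d 1))) =
      if e = d then (d 0 + 1) * (∑ i, Function.update ρ 0 0 i * d i - d.degree) else 0 := by
  rw [coeff_pderiv, coeff_dplus41_monomial_of_lt ρ φ hφ0 (by simpa using Nat.lt_succ_of_le hde)]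
  simp only [add_left_inj]
  split_ifs with h
  · subst h
    simp [Finsupp.degree_eq_sum, sub_mul, Finset.sum_sub_distrib, mul_comm]
  · rw [zero_mul]

theorem coeff_pderiv_dplus41_of_forall_le (hφ0 : ∀ i, pderiv 0 (φ i) = 0)
    {p : MvPolynomial (Fin n) ℂ} {e : Fin n →₀ ℕ} (hp : ∀ d ∈ p.support, d 0 ≤ e 0) :
    coeff e (pderiv 0 (dplus41 n ρ φ p)) =
      (e 0 + 1) * (∑ i, Function.update ρ 0 0 i * e i - e.degree) * coeff e p := by
  have hmon : ∀ d, monomial d (coeff d p) = coeff d p • monomial d 1 := by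
    simp [smul_monomial]
  conv_lhs => rw [p.as_sum]
  simp only [hmon, map_sum, map_smul, Derivation.map_smul, coeff_sum, coeff_smul, smul_eq_mul]
  rw [Finset.sum_congr rfl fun d hd => by rw [coeff_pderiv_dplus41_monomial ρ φ hφ0 (hp d hd)]]
  simp only [mul_ite, mul_zero]
  rw [Finset.sum_ite_eq]
  split_ifs with he
  · ring
  · rw [notMem_support_iff.mp he, mul_zero]

theorem isHomogeneous_rhs41 (hφhom : ∀ i, (φ i).IsHomogeneous 2) (i : Fin n) :
    (rhs41 n ρ φ i).IsHomogeneous 2 := by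
  rw [rhs41_eq, mul_assoc]
  exact (((isHomogeneous_X ℂ 0).mul (isHomogeneous_X ℂ i)).C_mul _).add (hφhom i)

theorem isHomogeneous_dplus41 (hφhom : ∀ i, (φ i).IsHomogeneous 2)
    {p : MvPolynomial (Fin n) ℂ} {m : ℕ} (hp : p.IsHomogeneous m) :
    (dplus41 n ρ φ p).IsHomogeneous (m + 1) := by
  rw [dplus41_apply]
  refine IsHomogeneous.sum _ _ _ fun i _ => ?_
  obtain _ | m := m
  · rw [← totalDegree_zero_iff_isHomogeneous, totalDegree_eq_zero_iff_eq_C] at hp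
    rw [hp, pderiv_C, mul_zero]
    exact isHomogeneous_zero _ _ _
  · convert (isHomogeneous_rhs41 ρ φ hφhom i).mul hp.pderiv using 1
    omega

theorem pderiv_dplus41_mem_restrictSupport (hφhom : ∀ i, (φ i).IsHomogeneous 2)
    (hφ0 : ∀ i, pderiv 0 (φ i) = 0) {M k : ℕ} {p : MvPolynomial (Fin n) ℂ}
    (hp : p ∈ restrictSupport ℂ {d : Fin n →₀ ℕ | d.degree = M ∧ d 0 ≤ k}) :
    pderiv 0 (dplus41 n ρ φ p) ∈ restrictSupport ℂ {d : Fin n →₀ ℕ | d.degree = M ∧ d 0 ≤ k} := by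
  have hp' : p.IsHomogeneous M := isHomogeneous_of_mem_restrictSupport hp fun _ => And.left
  have hLp : (pderiv 0 (dplus41 n ρ φ p)).IsHomogeneous M :=
    (isHomogeneous_dplus41 ρ φ hφhom hp').pderiv
  rw [mem_restrictSupport_iff] at hp ⊢
  intro e he
  refine ⟨by_contra fun h => mem_support_iff.mp he (hLp.coeff_eq_zero h), ?_⟩
  by_contra! hk
  have hpe : coeff e p = 0 := notMem_support_iff.mp fun h => (hp h).2.not_gt hk
  rw [Finset.mem_coe, mem_support_iff, coeff_pderiv_dplus41_of_forall_le ρ φ hφ0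
    fun d hd => (hp hd).2.trans hk.le, hpe, mul_zero] at he
  exact he rfl

theorem exists_pderiv_dplus41_eq_zero_of_resonant (hφhom : ∀ i, (φ i).IsHomogeneous 2)
    (hφ0 : ∀ i, pderiv 0 (φ i) = 0) {d₀ : Fin n →₀ ℕ}
    (hres : ∑ i, Function.update ρ 0 0 i * d₀ i = d₀.degree) :
    ∃ P : MvPolynomial (Fin n) ℂ, P ≠ 0 ∧ P.IsHomogeneous d₀.degree ∧
      pderiv 0 (dplus41 n ρ φ P) = 0 := by
  set S := {d : Fin n →₀ ℕ | d.degree = d₀.degree ∧ d 0 ≤ d₀ 0}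
  have : Finite S := ((Finsupp.finite_of_degree_eq _).subset fun _ => And.left).to_subtype
  have : FiniteDimensional ℂ (restrictSupport ℂ S) := .of_basis (basisRestrictSupport ℂ S)
  have hnotsurj : ¬ Set.SurjOn (fun p => pderiv 0 (dplus41 n ρ φ p)) (restrictSupport ℂ S)
      (restrictSupport ℂ S) := fun hsurj => by
    obtain ⟨p, hp, hpd₀⟩ := hsurj ((monomial_mem_restrictSupport ℂ).mpr (.inl ⟨rfl, le_rfl⟩) :
      monomial d₀ (1 : ℂ) ∈ restrictSupport ℂ S)
    rw [SetLike.mem_coe, mem_restrictSupport_iff] at hp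
    have h : coeff d₀ (pderiv 0 (dplus41 n ρ φ p)) = coeff d₀ (monomial d₀ 1) :=
      congrArg (coeff d₀) hpd₀
    rw [coeff_pderiv_dplus41_of_forall_le ρ φ hφ0 fun d hd => (hp hd).2, hres, sub_self,
      mul_zero, zero_mul, coeff_monomial, if_pos rfl] at h
    exact zero_ne_one h
  obtain ⟨P, hPS, hP0, hLP⟩ :=
    ((pderiv 0).toLinearMap ∘ₗ dplus41 n ρ φ).exists_mem_ne_zero_map_eq_zero_of_not_surjOn
      (fun _ => pderiv_dplus41_mem_restrictSupport ρ φ hφhom hφ0) hnotsurj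
  exact ⟨P, hP0, isHomogeneous_of_mem_restrictSupport hPS fun _ => And.left, hLP⟩

theorem exists_degree_eq_and_resonant {M : ℕ} {z : Fin n → ℕ} (hz0 : z 0 = 0)
    (hzρ : ∑ i, (z i : ℂ) * ρ i = M) (hzM : ∑ i, z i ≤ M) :
    ∃ d : Fin n →₀ ℕ, d.degree = M ∧ ∑ i, Function.update ρ 0 0 i * d i = d.degree := by
  set d := Finsupp.equivFunOnFinite.symm z + Finsupp.single 0 (M - ∑ i, z i)
  have hdeg : d.degree = M := by
    rw [map_add, Finsupp.degree_single, Finsupp.degree_eq_sum]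
    simp only [Finsupp.coe_equivFunOnFinite_symm]
    omega
  refine ⟨d, hdeg, ?_⟩
  rw [hdeg, ← hzρ]
  refine Finset.sum_congr rfl fun i _ => ?_
  obtain rfl | hi := eq_or_ne i 0
  · simp [hz0]
  · simp [d, Function.update_of_ne hi, Finsupp.single_eq_of_ne hi, mul_comm]

end System41

/-- Corollary 8: if a resonance condition `z₂ρ₂ + ⋯ + zₙρₙ = M`, `|z| ≤ M`
holds for some tuple of nonnegative integers `z`, then there exists a nonzero
base function of degree `M`. -/
theorem exists_base_function_of_resonance
    (n : ℕ) [NeZero n] (ρ : Fin n → ℂ)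
    (φ : Fin n → MvPolynomial (Fin n) ℂ)
    (hφhom : ∀ i, (φ i).IsHomogeneous 2)
    (hφ0 : ∀ i, pderiv (0 : Fin n) (φ i) = 0)
    (M : ℕ)
    (hres : ∃ z : Fin n → ℕ, z 0 = 0 ∧
      (∑ i, (z i : ℂ) * ρ i) = (M : ℂ) ∧ (∑ i, z i) ≤ M) :
    ∃ P : MvPolynomial (Fin n) ℂ, P ≠ 0 ∧ P.IsHomogeneous M ∧
      pderiv (0 : Fin n) (dplus41 n ρ φ P) = 0 := by
  obtain ⟨z, hz0, hzρ, hzM⟩ := hres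
  obtain ⟨d₀, hdeg, hd₀⟩ := exists_degree_eq_and_resonant ρ hz0 hzρ hzM
  exact hdeg ▸ exists_pderiv_dplus41_eq_zero_of_resonant ρ φ hφhom hφ0 hd₀
end

section
/- Under the linear change of variables (x_1, x_2)ᵀ = L·(p_1, p_2)ᵀ, where L is the matrix with columns c^(1) and c^(2), the planar system transforms into ṗ_1 = -p_1² + (ρ_2 - 1)p_1p_2, ṗ_2 = -p_2² + (ρ_1 - 1)p_1p_2; that is, f(L·p) = L·g(p) where f = (f_1, f_2) is the original right-hand side and g_1(p) = -p_1² + (ρ_2-1)p_1p_2, g_2(p) = -p_2² + (ρ_1-1)p_1p_2. -/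
open MvPolynomial

/-- Under the linear change of variables `x = L·p`, where `L` has columns
`c⁽¹⁾, c⁽²⁾`, the planar quadratic system (5.1) becomes
`ṗ₁ = -p₁² + (ρ₂-1)p₁p₂`, `ṗ₂ = -p₂² + (ρ₁-1)p₁p₂`. -/
theorem planar_change_of_variables
    (a₁ b₁ d₂ a₂ b₂ d₁ : ℂ)
    (f : Fin 2 → MvPolynomial (Fin 2) ℂ)
    (hf0 : f 0 = C a₁ * X 0 ^ 2 + C b₁ * X 0 * X 1 + C d₂ * X 1 ^ 2)
    (hf1 : f 1 = C a₂ * X 1 ^ 2 + C b₂ * X 0 * X 1 + C d₁ * X 0 ^ 2)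
    (c₁ c₂ : Fin 2 → ℂ)
    (hc₁ : ∀ i, eval c₁ (f i) + c₁ i = 0)
    (hc₂ : ∀ i, eval c₂ (f i) + c₂ i = 0)
    (hind : LinearIndependent ℂ ![c₁, c₂])
    (ρ₁ ρ₂ : ℂ)
    (hK₁ : (Matrix.of fun i j : Fin 2 => eval c₁ (pderiv j (f i)) + if i = j then (1 : ℂ) else 0).charpoly
        = (Polynomial.X + Polynomial.C 1) * (Polynomial.X - Polynomial.C ρ₁))
    (hK₂ : (Matrix.of fun i j : Fin 2 => eval c₂ (pderiv j (f i)) + if i = j then (1 : ℂ) else 0).charpoly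
        = (Polynomial.X + Polynomial.C 1) * (Polynomial.X - Polynomial.C ρ₂))
    :
    ∀ p : Fin 2 → ℂ, ∀ i : Fin 2,
      eval ((Matrix.of ![![c₁ 0, c₂ 0], ![c₁ 1, c₂ 1]]).mulVec p) (f i)
        = (Matrix.of ![![c₁ 0, c₂ 0], ![c₁ 1, c₂ 1]]).mulVec
            ![eval p (-(X 0) ^ 2 + C (ρ₂ - 1) * X 0 * X 1),
              eval p (-(X 1) ^ 2 + C (ρ₁ - 1) * X 0 * X 1)] i := by
  -- determinant of the change-of-basis matrix is nonzero
  have hD : c₁ 0 * c₂ 1 - c₁ 1 * c₂ 0 ≠ 0 := by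
    have h1 : LinearIndependent ℂ (fun i => (Matrix.of ![c₁, c₂]) i) := hind
    have h2 := Matrix.linearIndependent_rows_iff_isUnit.mp h1
    have h3 := (Matrix.isUnit_iff_isUnit_det _).mp h2
    rw [Matrix.det_fin_two] at h3
    simpa using h3.ne_zero
  -- coordinate equations from the fixed points
  have E1 := hc₁ 0; have E2 := hc₁ 1; have E3 := hc₂ 0; have E4 := hc₂ 1
  simp only [hf0, hf1, map_add, map_mul, map_pow, eval_C, eval_X] at E1 E2 E3 E4
  -- trace equations from the Kovalevskaya matrices
  have hexp : ∀ r : ℂ, (Polynomial.X + Polynomial.C 1) * (Polynomial.X - Polynomial.C r)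
      = Polynomial.X^2 + Polynomial.C (1-r) * Polynomial.X - Polynomial.C r := by
    intro r; simp only [map_sub, map_one]; ring
  have T1 : (2*a₁*c₁ 0 + b₁*c₁ 1 + 1) + (2*a₂*c₁ 1 + b₂*c₁ 0 + 1) = ρ₁ - 1 := by
    have ht := Matrix.trace_eq_neg_charpoly_coeff
      (Matrix.of fun i j : Fin 2 => eval c₁ ((pderiv j) (f i)) + if i = j then (1:ℂ) else 0)
    rw [hK₁, hexp] at ht
    simp [Matrix.trace_fin_two, Matrix.of_apply, hf0, hf1, pderiv_X, Pi.single_apply] at ht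
    linear_combination ht
  have T2 : (2*a₁*c₂ 0 + b₁*c₂ 1 + 1) + (2*a₂*c₂ 1 + b₂*c₂ 0 + 1) = ρ₂ - 1 := by
    have ht := Matrix.trace_eq_neg_charpoly_coeff
      (Matrix.of fun i j : Fin 2 => eval c₂ ((pderiv j) (f i)) + if i = j then (1:ℂ) else 0)
    rw [hK₂, hexp] at ht
    simp [Matrix.trace_fin_two, Matrix.of_apply, hf0, hf1, pderiv_X, Pi.single_apply] at ht
    linear_combination ht
  -- the mixed bilinear term
  set u0 := c₁ 0; set u1 := c₁ 1; set v0 := c₂ 0; set v1 := c₂ 1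
  set w0 : ℂ := 2*a₁*(u0*v0) + b₁*(u0*v1 + u1*v0) + 2*d₂*(u1*v1) with hw0
  set w1 : ℂ := 2*a₂*(u1*v1) + b₂*(u0*v1 + u1*v0) + 2*d₁*(u0*v0) with hw1
  have B : u0*w1 - u1*w0 = (ρ₁ - 1) * (u0*v1 - u1*v0) := by
    linear_combination 2*v0*E2 - 2*v1*E1 + (u0*v1 - u1*v0)*T1
  have A : w0*v1 - w1*v0 = (ρ₂ - 1) * (u0*v1 - u1*v0) := by
    linear_combination 2*u1*E3 - 2*u0*E4 + (u0*v1 - u1*v0)*T2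
  have M1 : w0 = (ρ₂-1)*u0 + (ρ₁-1)*v0 :=
    mul_left_cancel₀ hD (by linear_combination u0*A + v0*B)
  have M2 : w1 = (ρ₂-1)*u1 + (ρ₁-1)*v1 :=
    mul_left_cancel₀ hD (by linear_combination u1*A + v1*B)
  intro p i
  fin_cases i
  · show eval _ (f 0) = _
    simp only [Matrix.mulVec, dotProduct, Fin.sum_univ_two, Matrix.of_apply, Fin.mk_zero, Fin.mk_one,
      Matrix.cons_val_zero, Matrix.cons_val_one, Matrix.head_cons, hf0,
      map_add, map_mul, map_pow, map_neg, eval_C, eval_X]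
    linear_combination (p 0)^2*E1 + (p 1)^2*E3 + (p 0)*(p 1)*M1
  · show eval _ (f 1) = _
    simp only [Matrix.mulVec, dotProduct, Fin.sum_univ_two, Matrix.of_apply, Fin.mk_zero, Fin.mk_one,
      Matrix.cons_val_zero, Matrix.cons_val_one, Matrix.head_cons, hf1,
      map_add, map_mul, map_pow, map_neg, eval_C, eval_X]
    linear_combination (p 0)^2*E2 + (p 1)^2*E4 + (p 0)*(p 1)*M2
end
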